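/- Let x₀ ∈ ℂⁿ and let Ψ₁, Ψ₂ be holomorphic (complex Fréchet differentiable) functions on an open neighborhood U of (x₀, conj x₀) in ℂⁿ × ℂⁿ such that Ψ₁(x, conj x) = Ψ₂(x, conj x) for all x in a neighborhood of x₀. Then Ψ₁ = Ψ₂ on a neighborhood of (x₀, conj x₀). In particular, a real-analytic function Φ near x₀ has at most one polarization: there is at most one holomorphic Ψ near (x₀, conj x₀) with Ψ(x, conj x) = Φ(x) near x₀. -/

import Mathlib

/-!
Put `F = Ψ₁ - Ψ₂`. Every point `(a, b)` near `(x₀, x̄₀)` lies on the complex line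
`z ↦ (c + z d, c̄ + z d̄)`, at `z = i`, where `c = (a + b̄)/2` and `d = (a - b̄)/(2i)`.
The real points of this line lie on the graph `{(w, w̄)}` of conjugation, where `F` vanishes,
so `F` restricted to the line is a holomorphic function of one variable vanishing on a real
interval. By the identity theorem it vanishes on the preimage of a small ball around
`(x₀, x̄₀)`, which is convex and contains both `0` and `i`.
-/

open Complex

noncomputable section

/-- `ℂⁿ` with its Euclidean (Hermitian) norm. -/
abbrev En (n : ℕ) := EuclideanSpace ℂ (Fin n)

/-- Componentwise complex conjugation on `ℂⁿ`. -/
def conjV (n : ℕ) (x : En n) : En n :=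
  (WithLp.equiv 2 (Fin n → ℂ)).symm fun j => (starRingEnd ℂ) (x j)

open Filter Topology Set

theorem eqOn_zero_of_forall_ofReal_eq_zero {F : Type*} [NormedAddCommGroup F] [NormedSpace ℂ F]
    [CompleteSpace F] {f : ℂ → F} {D : Set ℂ} (hD : IsOpen D) (hDc : IsPreconnected D)
    (hf : DifferentiableOn ℂ f D) {t₀ : ℝ} (ht₀ : (t₀ : ℂ) ∈ D)
    (hreal : ∀ t : ℝ, (t : ℂ) ∈ D → f t = 0) : EqOn f 0 D := by
  refine (hf.analyticOnNhd hD).eqOn_zero_of_preconnected_of_frequently_eq_zero hDc ht₀ ?_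
  have hofReal : Tendsto ((↑) : ℝ → ℂ) (𝓝[≠] t₀) (𝓝[≠] (t₀ : ℂ)) :=
    tendsto_nhdsWithin_of_tendsto_nhds_of_eventually_within _
      (continuous_ofReal.tendsto t₀ |>.mono_left nhdsWithin_le_nhds)
      (eventually_nhdsWithin_of_forall fun t ht => by simpa using ht)
  have hmemD : ∀ᶠ t : ℝ in 𝓝[≠] t₀, (t : ℂ) ∈ D :=
    nhdsWithin_le_nhds (continuous_ofReal.continuousAt.preimage_mem_nhds (hD.mem_nhds ht₀))
  exact hofReal.frequently (hmemD.mono hreal).frequently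

section ConjLine

variable {E F : Type*} [NormedAddCommGroup E] [NormedSpace ℂ E]
  [NormedAddCommGroup F] [NormedSpace ℂ F] [CompleteSpace F] (σ : E →L⋆[ℂ] E)

def conjLine (c d : E) (z : ℂ) : E × E := (c + z • d, σ c + z • σ d)

theorem conjLine_ofReal (c d : E) (t : ℝ) :
    conjLine σ c d t = (c + (t : ℂ) • d, σ (c + (t : ℂ) • d)) := by
  simp only [conjLine, map_add, ContinuousLinearMap.map_smulₛₗ, conj_ofReal]

theorem conjLine_I {a b : E} (hσ : Function.Involutive σ) :
    conjLine σ ((2 : ℂ)⁻¹ • (a + σ b)) ((2 * I)⁻¹ • (a - σ b)) I = (a, b) := by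
  simp only [conjLine, map_add, map_sub, ContinuousLinearMap.map_smulₛₗ, hσ b, Prod.mk.injEq,
    map_inv₀, map_mul, map_ofNat, conj_I, smul_add, smul_sub, smul_smul]
  have h₁ : I * (2 * I)⁻¹ = 2⁻¹ := by field_simp
  have h₂ : I * (2 * -I)⁻¹ = -2⁻¹ := by field_simp
  exact ⟨by rw [h₁]; module, by rw [h₂]; module⟩

theorem differentiable_conjLine (c d : E) : Differentiable ℂ (conjLine σ c d) :=
  ((differentiable_const c).add (differentiable_id.smul_const d)).prodMk
    ((differentiable_const _).add (differentiable_id.smul_const _))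

theorem convex_preimage_conjLine {V : Set (E × E)} (hV : Convex ℝ V) (c d : E) :
    Convex ℝ (conjLine σ c d ⁻¹' V) :=
  (hV.translate_preimage_right (c, σ c)).linear_preimage
    ((LinearMap.toSpanSingleton ℂ (E × E) (d, σ d)).restrictScalars ℝ)

theorem apply_conjLine_eq_zero {G : E × E → F} {V : Set (E × E)} (hV : IsOpen V)
    (hVc : Convex ℝ V) (hG : DifferentiableOn ℂ G V)
    (hgraph : ∀ w, (w, σ w) ∈ V → G (w, σ w) = 0) {c d : E} (hc : (c, σ c) ∈ V) {z : ℂ}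
    (hz : conjLine σ c d z ∈ V) : G (conjLine σ c d z) = 0 := by
  have hline := differentiable_conjLine σ c d
  have hD : IsOpen (conjLine σ c d ⁻¹' V) := hV.preimage hline.continuous
  refine eqOn_zero_of_forall_ofReal_eq_zero hD
    (convex_preimage_conjLine σ hVc c d).isPreconnected
    (hG.comp hline.differentiableOn (mapsTo_preimage _ _)) (t₀ := 0) ?_ (fun t ht => ?_) hz
  · simpa [conjLine] using hc
  · rw [mem_preimage, conjLine_ofReal] at ht
    simpa only [Function.comp_apply, conjLine_ofReal] using hgraph _ ht

theorem eventually_eq_zero_of_eventually_eq_zero_on_graph (hσ : Function.Involutive σ)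
    {G : E × E → F} {x₀ : E} (hG : ∀ᶠ p in 𝓝 (x₀, σ x₀), DifferentiableAt ℂ G p)
    (hgraph : ∀ᶠ w in 𝓝 x₀, G (w, σ w) = 0) : ∀ᶠ p in 𝓝 (x₀, σ x₀), G p = 0 := by
  obtain ⟨ε, hε, hball⟩ := Metric.mem_nhds_iff.mp
    (hG.and ((continuous_fst.tendsto (x₀, σ x₀)).eventually hgraph))
  set m : E × E → E := fun p => (2 : ℂ)⁻¹ • (p.1 + σ p.2)
  have hm : Continuous m :=
    continuous_const.smul (continuous_fst.add (σ.continuous.comp continuous_snd))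
  have hm₀ : m (x₀, σ x₀) = x₀ := by simp only [m, hσ x₀]; module
  have hcenter : Tendsto (fun p => (m p, σ (m p))) (𝓝 (x₀, σ x₀)) (𝓝 (x₀, σ x₀)) :=
    (hm.prodMk (σ.continuous.comp hm)).tendsto' _ _ (by simp only [Function.comp_apply, hm₀])
  filter_upwards [Metric.ball_mem_nhds _ hε,
    hcenter (Metric.isOpen_ball.mem_nhds (Metric.mem_ball_self hε))] with ⟨a, b⟩ hp hcp
  rw [← conjLine_I σ hσ (a := a) (b := b)] at hp ⊢
  exact apply_conjLine_eq_zero σ Metric.isOpen_ball (convex_ball _ _)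
    (fun q hq => (hball hq).1.differentiableWithinAt) (fun w hw => (hball hw).2) hcp hp

end ConjLine

def conjCLM (n : ℕ) : En n →L⋆[ℂ] En n where
  toFun := conjV n
  map_add' x y := by ext j; simp [conjV]
  map_smul' c x := by ext j; simp [conjV]
  cont := (PiLp.continuous_toLp 2 _).comp <| continuous_pi fun j =>
    continuous_conj.comp ((continuous_apply j).comp (PiLp.continuous_ofLp 2 _))

theorem conjCLM_involutive (n : ℕ) : Function.Involutive (conjCLM n) := fun x => by
  change conjV n (conjV n x) = x
  ext j; simp [conjV]

/-- two holomorphic functions near `(x₀, conj x₀)` that agree on the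
anti-diagonal `{(x, conj x)}` near `x₀` agree on a whole neighborhood of `(x₀, conj x₀)`.
In particular the polarization of a real-analytic function is unique. -/
theorem statement4 (n : ℕ)
    (x₀ : En n) (U : Set (En n × En n)) (hU : IsOpen U) (hx₀U : (x₀, conjV n x₀) ∈ U)
    (Ψ₁ Ψ₂ : En n × En n → ℂ)
    (h₁ : DifferentiableOn ℂ Ψ₁ U) (h₂ : DifferentiableOn ℂ Ψ₂ U)
    (heq : ∃ W : Set (En n), IsOpen W ∧ x₀ ∈ W ∧
      ∀ x ∈ W, Ψ₁ (x, conjV n x) = Ψ₂ (x, conjV n x)) :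
    ∃ U' : Set (En n × En n), IsOpen U' ∧ (x₀, conjV n x₀) ∈ U' ∧ U' ⊆ U ∧
      Set.EqOn Ψ₁ Ψ₂ U' := by
  obtain ⟨W, hW, hx₀W, hWeq⟩ := heq
  have hdiff : ∀ᶠ p in 𝓝 (x₀, conjCLM n x₀), DifferentiableAt ℂ (Ψ₁ - Ψ₂) p :=
    eventually_of_mem (hU.mem_nhds hx₀U) fun p hp =>
      (h₁.sub h₂).differentiableAt (hU.mem_nhds hp)
  have hgraph : ∀ᶠ w in 𝓝 x₀, (Ψ₁ - Ψ₂) (w, conjCLM n w) = 0 :=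
    eventually_of_mem (hW.mem_nhds hx₀W) fun w hw => sub_eq_zero.mpr (hWeq w hw)
  have hzero := eventually_eq_zero_of_eventually_eq_zero_on_graph _ (conjCLM_involutive n)
    hdiff hgraph
  obtain ⟨U', hU', hU'open, hx₀U'⟩ :=
    eventually_nhds_iff.mp (Filter.Eventually.and (hU.mem_nhds hx₀U) hzero)
  exact ⟨U', hU'open, hx₀U', fun p hp => (hU' p hp).1, fun p hp => sub_eq_zero.mp (hU' p hp).2⟩

end
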